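/- arXiv:2108.05717 — 4 statements merged into one kernel-verified Lean document; each statement's English description precedes it below -/
import Mathlib

section
/- If a Boolean variable y is positive unate in F(X,Y), i.e., F(X,Y)|_{y=0} ∧ ¬F(X,Y)|_{y=1} is unsatisfiable, then the constant function ψ = 1 (true) is a Skolem function for y, that is, for all assignments to X and the other Y variables, ∃y F ↔ F[y := 1]. -/
/-- If `y` is positive unate in `F` (i.e. `F|_{y=0} ∧ ¬F|_{y=1}` is unsatisfiable),
then the constant function `true` is a Skolem function for `y`:
for all assignments `σ` to the remaining variables, `∃ y, F ↔ F[y := 1]`. -/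
theorem positive_unate_skolem_true {α : Type*} (F : (α → Bool) → Bool → Prop)
    (h : ¬ ∃ σ : α → Bool, F σ false ∧ ¬ F σ true) :
    ∀ σ : α → Bool, (∃ b : Bool, F σ b) ↔ F σ true := by
  push_neg at h
  intro σ
  constructor
  · rintro ⟨b, hb⟩
    cases b
    · exact h σ hb
    · exact hb
  · exact fun hb => ⟨true, hb⟩
end

section
/- If a Boolean variable y is negative unate in F(X,Y), i.e., F(X,Y)|_{y=1} ∧ ¬F(X,Y)|_{y=0} is unsatisfiable, then the constant function ψ = 0 (false) is a Skolem function for y. -/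
/-- If `y` is negative unate in `F` (i.e. `F|_{y=1} ∧ ¬F|_{y=0}` is unsatisfiable),
then the constant function `false` is a Skolem function for `y`. -/
theorem negative_unate_skolem_false {α : Type*} (F : (α → Bool) → Bool → Prop)
    (h : ¬ ∃ σ : α → Bool, F σ true ∧ ¬ F σ false) :
    ∀ σ : α → Bool, (∃ b : Bool, F σ b) ↔ F σ false := by
  push_neg at h
  intro σ
  constructor
  · rintro ⟨b, hb⟩
    cases b
    · exact hb
    · exact h σ hb
  · exact fun hf => ⟨false, hf⟩
end

section
/- Padoa's theorem (one direction): if the formula I = F(W) ∧ F(W↦Z) ∧ (⋀_{w_j ∈ S, j≠i} (w_j ↔ z_j)) ∧ w_i ∧ ¬z_i is unsatisfiable, where Z is a set of fresh copies of the variables W, then F defines w_i in terms of S, i.e., there exists a Boolean function H on the variables S such that F(W) ⊨ (w_i ↔ H(S)). -/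
/-- Padoa's theorem (one direction): if
`F(W) ∧ F(W↦Z) ∧ ⋀_{w_j ∈ S}(w_j ↔ z_j) ∧ w_i ∧ ¬z_i` is unsatisfiable
(expressed via two assignments `σ`, `τ` over the fresh copies), then `F` defines
`w` in terms of `S`: there is a function `H` over `S` with `F ⊨ w ↔ H(S)`. -/
theorem padoa_forward {W : Type*} (F : (W → Bool) → Prop) (S : Set W) (w : W)
    (hw : w ∉ S)
    (hunsat : ¬ ∃ σ τ : W → Bool, F σ ∧ F τ ∧ (∀ j ∈ S, σ j = τ j) ∧
      σ w = true ∧ τ w = false) :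
    ∃ H : (S → Bool) → Bool, ∀ σ : W → Bool, F σ → σ w = H (fun s => σ s.val) := by
  classical
  refine ⟨fun g => decide (∃ σ : W → Bool, F σ ∧ (∀ s : S, σ s.val = g s) ∧ σ w = true),
    fun σ hF => ?_⟩
  cases hσw : σ w with
  | true =>
    symm
    simp only [decide_eq_true_eq]
    exact ⟨σ, hF, fun s => rfl, hσw⟩
  | false =>
    symm
    simp only [decide_eq_false_iff_not]
    rintro ⟨τ, hFτ, hagree, hτw⟩
    exact hunsat ⟨τ, σ, hFτ, hF, fun j hj => hagree ⟨j, hj⟩, hτw, hσw⟩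
end

section
/- Variables with extracted definitions form a determined set: if for each y in a subset Z ⊆ Y, F defines y in terms of X ∪ (Z-predecessors of y) (with an acyclic dependency order on Z), with definitions φ_y, then the vector Φ = (φ_y)_{y ∈ Z} can be extended to a Skolem function vector for F, i.e., there exist functions for Y \ Z that, together with the compositions of the φ_y, form a vector Ψ satisfying ∃Y F ≡ F(X, Ψ(X)). -/
/-- Variables with extracted definitions form a determined set: if `Φ` gives, for
each `z ∈ Z ⊆ Y`, the (composed) definition of `z` as a function of `X` — i.e.
every model `(x, y)` of `F` satisfies `y z = Φ x z` — then `Φ` extends to a full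
Skolem function vector `Ψ` for `∃Y F`. -/
theorem determined_set_extends_to_skolem {X Y : Type*}
    (F : (X → Bool) → (Y → Bool) → Prop) (Z : Set Y)
    (Φ : (X → Bool) → Z → Bool)
    (hdef : ∀ (x : X → Bool) (y : Y → Bool), F x y →
      ∀ (z : Y) (hz : z ∈ Z), y z = Φ x ⟨z, hz⟩) :
    ∃ Ψ : (X → Bool) → Y → Bool,
      (∀ (x : X → Bool) (z : Y) (hz : z ∈ Z), Ψ x z = Φ x ⟨z, hz⟩) ∧
      (∀ x : X → Bool, (∃ y : Y → Bool, F x y) ↔ F x (Ψ x)) := by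
  classical
  refine ⟨fun x z => if hz : z ∈ Z then Φ x ⟨z, hz⟩
      else if h : ∃ y, F x y then h.choose z else false, ?_, ?_⟩
  · intro x z hz; simp [hz]
  · intro x
    constructor
    · rintro h
      have hy := h.choose_spec
      have : (fun z => if hz : z ∈ Z then Φ x ⟨z, hz⟩
          else if h : ∃ y, F x y then h.choose z else false) = h.choose := by
        funext z
        by_cases hz : z ∈ Z
        · simp [hz, hdef x h.choose hy z hz]
        · simp [hz, h]
      show F x (fun z => if hz : z ∈ Z then Φ x ⟨z, hz⟩
          else if h : ∃ y, F x y then h.choose z else false)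
      rw [this]; exact hy
    · intro h; exact ⟨_, h⟩
end
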